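/- arXiv:2310.13434 — 2 statements merged into one kernel-verified Lean document; each statement's English description precedes it below -/
import Mathlib

section
/- Fix an unlabeled index i ∈ {nℓ+1, …, n} (so A_{ii} = −αu), assume λ I_d + (1/n)·X_{−i} A X_{−i}ᵀ is invertible with inverse Q_{−i} and that 1 − (αu/n)·x_iᵀ Q_{−i} x_i ≠ 0 (so Q exists). Define ω = (1/n)·Σ_{j=1}^{nℓ} y_j Q x_j and ω_{−i} = (1/n)·Σ_{j=1}^{nℓ} y_j Q_{−i} x_j. Then the score of the unlabeled point x_i decouples as ωᵀ x_i = ω_{−i}ᵀ x_i / ( 1 − (αu/n)·x_iᵀ Q_{−i} x_i ). -/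
open Matrix

/-! Removing the unlabeled column `x_i` from `X` changes `λ I + (1/n) X A Xᵀ` by the rank-one
term `(αu/n) x_i x_iᵀ`, so `Q` is a Sherman–Morrison update of `Q_{−i}`; by the matrix
determinant lemma the nonvanishing denominator is exactly what makes this update invertible.
Pairing the resolvent identity `Q = Q_{−i} + (αu/n) Q_{−i} x_i x_iᵀ Q` with `x_i` gives
`x_iᵀ Q v = x_iᵀ Q_{−i} v + (αu/n) (x_iᵀ Q_{−i} x_i) (x_iᵀ Q v)` for every `v`; since
`ω = Q b` and `ω_{−i} = Q_{−i} b` for the same vector `b = (1/n) Σ y_j x_j`, the claim follows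
by solving for `x_iᵀ Q b`. -/

namespace Matrix

theorem mul_diagonal_mul_transpose_eq_updateCol_add {m n S : Type*} [Fintype n] [DecidableEq n]
    [CommSemiring S] (X : Matrix m n S) (D : n → S) (i : n) :
    X * diagonal D * Xᵀ = X.updateCol i 0 * diagonal D * (X.updateCol i 0)ᵀ
      + D i • vecMulVec (fun r => X r i) (fun r => X r i) := by
  ext r t
  simp only [mul_apply, diagonal_apply, mul_ite, mul_zero, Finset.sum_ite_eq', Finset.mem_univ,
    if_true, transpose_apply, updateCol_apply, add_apply, smul_apply, vecMulVec_apply, smul_eq_mul]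
  rw [← Finset.add_sum_erase _ _ (Finset.mem_univ i),
    ← Finset.add_sum_erase _ _ (Finset.mem_univ i)]
  simp only [if_true, Pi.zero_apply, zero_mul, mul_zero, zero_add]
  rw [add_comm]
  congr 1
  · exact Finset.sum_congr rfl fun k hk => by simp only [if_neg (Finset.ne_of_mem_erase hk)]
  · ring

variable {m R : Type*} [Fintype m] [DecidableEq m] [Field R]

theorem det_sub_smul_vecMulVec {M : Matrix m m R} (hM : IsUnit M.det) (a : R) (u w : m → R) :
    (M - a • vecMulVec u w).det = M.det * (1 - a * (w ⬝ᵥ M⁻¹ *ᵥ u)) := by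
  have h : M - a • vecMulVec u w = M + replicateCol Unit (-a • u) * replicateRow Unit w := by
    rw [← vecMulVec_eq, smul_vecMulVec, neg_smul, sub_eq_add_neg]
  rw [h, det_add_replicateCol_mul_replicateRow hM, Matrix.mul_assoc, ← replicateCol_mulVec]
  congr 1
  rw [det_unique, add_apply, one_apply_eq, replicateRow_mul_replicateCol_apply, mulVec_smul,
    dotProduct_smul, smul_eq_mul, neg_mul, sub_eq_add_neg]

theorem dotProduct_inv_sub_smul_vecMulVec_mulVec {M : Matrix m m R} (hM : IsUnit M.det) (a : R)
    (u w v : m → R) (hδ : 1 - a * (w ⬝ᵥ M⁻¹ *ᵥ u) ≠ 0) :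
    w ⬝ᵥ (M - a • vecMulVec u w)⁻¹ *ᵥ v = (w ⬝ᵥ M⁻¹ *ᵥ v) / (1 - a * (w ⬝ᵥ M⁻¹ *ᵥ u)) := by
  set N := M - a • vecMulVec u w
  have hN : IsUnit N.det := by
    rw [det_sub_smul_vecMulVec hM]
    exact hM.mul hδ.isUnit
  have hMN : M *ᵥ (N⁻¹ *ᵥ v) = v + (a * (w ⬝ᵥ N⁻¹ *ᵥ v)) • u := by
    rw [show M = N + a • vecMulVec u w by simp [N], add_mulVec, mulVec_mulVec,
      mul_nonsing_inv _ hN, one_mulVec, smul_mulVec, vecMulVec_mulVec, op_smul_eq_smul, smul_smul]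
  have hNv : N⁻¹ *ᵥ v = M⁻¹ *ᵥ v + (a * (w ⬝ᵥ N⁻¹ *ᵥ v)) • M⁻¹ *ᵥ u := by
    rw [← mulVec_smul, ← mulVec_add, ← hMN, mulVec_mulVec, nonsing_inv_mul _ hM, one_mulVec]
  have hw := congrArg (w ⬝ᵥ ·) hNv
  simp only [dotProduct_add, dotProduct_smul, smul_eq_mul] at hw
  rw [eq_div_iff hδ]
  linear_combination hw

end Matrix

theorem score_decoupling_unlabeled_general
    (d nℓ nu : ℕ)
    (X : Matrix (Fin d) (Fin (nℓ + nu)) ℝ)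
    (y : Fin nℓ → ℝ)
    (αℓ αu lam : ℝ)
    (A : Matrix (Fin (nℓ + nu)) (Fin (nℓ + nu)) ℝ)
    (hA : A = Matrix.diagonal (fun i : Fin (nℓ + nu) => if (i : ℕ) < nℓ then αℓ else -αu))
    (i : Fin (nℓ + nu)) (hi : nℓ ≤ (i : ℕ))
    (hinv : IsUnit (lam • (1 : Matrix (Fin d) (Fin d) ℝ)
      + ((nℓ + nu : ℕ) : ℝ)⁻¹ • (X.updateCol i 0 * A * (X.updateCol i 0)ᵀ)))
    (Qmi : Matrix (Fin d) (Fin d) ℝ)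
    (hQmi : Qmi = (lam • (1 : Matrix (Fin d) (Fin d) ℝ)
      + ((nℓ + nu : ℕ) : ℝ)⁻¹ • (X.updateCol i 0 * A * (X.updateCol i 0)ᵀ))⁻¹)
    (Q : Matrix (Fin d) (Fin d) ℝ)
    (hQ : Q = (lam • (1 : Matrix (Fin d) (Fin d) ℝ)
      + ((nℓ + nu : ℕ) : ℝ)⁻¹ • (X * A * Xᵀ))⁻¹)
    (xi : Fin d → ℝ) (hxi : xi = fun r => X r i)
    (hden : 1 - (αu / ((nℓ + nu : ℕ) : ℝ)) * (xi ⬝ᵥ Qmi.mulVec xi) ≠ 0)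
    (ω ωmi : Fin d → ℝ)
    (hω : ω = ((nℓ + nu : ℕ) : ℝ)⁻¹ •
      ∑ j : Fin nℓ, y j • Q.mulVec (fun r => X r (Fin.castAdd nu j)))
    (hωmi : ωmi = ((nℓ + nu : ℕ) : ℝ)⁻¹ •
      ∑ j : Fin nℓ, y j • Qmi.mulVec (fun r => X r (Fin.castAdd nu j))) :
    ω ⬝ᵥ xi
      = (ωmi ⬝ᵥ xi) / (1 - (αu / ((nℓ + nu : ℕ) : ℝ)) * (xi ⬝ᵥ Qmi.mulVec xi)) := by
  set c : ℝ := ((nℓ + nu : ℕ) : ℝ)⁻¹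
  have hrank_one : lam • 1 + c • (X * A * Xᵀ)
      = lam • 1 + c • (X.updateCol i 0 * A * (X.updateCol i 0)ᵀ)
        - (αu / ((nℓ + nu : ℕ) : ℝ)) • vecMulVec xi xi := by
    rw [hA, mul_diagonal_mul_transpose_eq_updateCol_add X _ i, if_neg (not_lt.mpr hi), hxi,
      smul_add, smul_smul, ← add_assoc, div_eq_inv_mul, mul_neg, neg_smul, ← sub_eq_add_neg]
  set b : Fin d → ℝ := c • ∑ j : Fin nℓ, y j • fun r => X r (Fin.castAdd nu j)
  have hpull : ∀ P : Matrix (Fin d) (Fin d) ℝ,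
      c • ∑ j : Fin nℓ, y j • P *ᵥ (fun r => X r (Fin.castAdd nu j)) = P *ᵥ b := fun P => by
    simp only [b, mulVec_smul, mulVec_sum]
  rw [hω, hωmi, hpull, hpull, dotProduct_comm, dotProduct_comm (Qmi *ᵥ b), hQ, hrank_one]
  rw [hQmi] at hden ⊢
  exact dotProduct_inv_sub_smul_vecMulVec_mulVec ((isUnit_iff_isUnit_det _).mp hinv) _ _ _ _ hden

/-- Decoupling of the score at an unlabeled point. For an unlabeled index `i`
(`A_{ii} = −αu`), with `Q_{−i}` the leave-one-out resolvent, `ω = (1/n)·Σ_{j≤nℓ} y_j Q x_j` and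
`ω_{−i} = (1/n)·Σ_{j≤nℓ} y_j Q_{−i} x_j`, the score decouples as
`ωᵀ x_i = ω_{−i}ᵀ x_i / (1 − (αu/n)·x_iᵀ Q_{−i} x_i)`. -/
theorem score_decoupling_unlabeled
    (d nℓ nu : ℕ) (hd : 1 ≤ d) (hnℓ : 1 ≤ nℓ) (hnu : 1 ≤ nu)
    (X : Matrix (Fin d) (Fin (nℓ + nu)) ℝ)
    (y : Fin nℓ → ℝ) (hy : ∀ j, y j = 1 ∨ y j = -1)
    (αℓ αu lam : ℝ) (hαℓ : 0 ≤ αℓ) (hαu : 0 ≤ αu) (hlam : 0 < lam)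
    (A : Matrix (Fin (nℓ + nu)) (Fin (nℓ + nu)) ℝ)
    (hA : A = Matrix.diagonal (fun i : Fin (nℓ + nu) => if (i : ℕ) < nℓ then αℓ else -αu))
    (i : Fin (nℓ + nu)) (hi : nℓ ≤ (i : ℕ))
    (hinv : IsUnit (lam • (1 : Matrix (Fin d) (Fin d) ℝ)
      + ((nℓ + nu : ℕ) : ℝ)⁻¹ • (X.updateCol i 0 * A * (X.updateCol i 0)ᵀ)))
    (Qmi : Matrix (Fin d) (Fin d) ℝ)
    (hQmi : Qmi = (lam • (1 : Matrix (Fin d) (Fin d) ℝ)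
      + ((nℓ + nu : ℕ) : ℝ)⁻¹ • (X.updateCol i 0 * A * (X.updateCol i 0)ᵀ))⁻¹)
    (Q : Matrix (Fin d) (Fin d) ℝ)
    (hQ : Q = (lam • (1 : Matrix (Fin d) (Fin d) ℝ)
      + ((nℓ + nu : ℕ) : ℝ)⁻¹ • (X * A * Xᵀ))⁻¹)
    (xi : Fin d → ℝ) (hxi : xi = fun r => X r i)
    (hden : 1 - (αu / ((nℓ + nu : ℕ) : ℝ)) * (xi ⬝ᵥ Qmi.mulVec xi) ≠ 0)
    (ω ωmi : Fin d → ℝ)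
    (hω : ω = ((nℓ + nu : ℕ) : ℝ)⁻¹ •
      ∑ j : Fin nℓ, y j • Q.mulVec (fun r => X r (Fin.castAdd nu j)))
    (hωmi : ωmi = ((nℓ + nu : ℕ) : ℝ)⁻¹ •
      ∑ j : Fin nℓ, y j • Qmi.mulVec (fun r => X r (Fin.castAdd nu j))) :
    ω ⬝ᵥ xi
      = (ωmi ⬝ᵥ xi) / (1 - (αu / ((nℓ + nu : ℕ) : ℝ)) * (xi ⬝ᵥ Qmi.mulVec xi)) :=
  score_decoupling_unlabeled_general d nℓ nu X y αℓ αu lam A hA i hi hinv Qmi hQmi Q hQ xi hxi hden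
    ω ωmi hω hωmi
end

section
/- Let x_1, …, x_{2m} be i.i.d. Gaussian random vectors N(μ, I_d) in ℝ^d, split into two halves, and define the within-class estimator T = (1/m²)·Σ_{k=1}^{m} Σ_{l=m+1}^{2m} ⟨x_k, x_l⟩. Then T is an unbiased estimator of the squared mean norm, E[T] = ‖μ‖², and its variance equals Var(T) = 2‖μ‖²/m + d/m². -/
/-!
Write `T = ∑ⱼ Uⱼ Vⱼ`, where `Uⱼ` and `Vⱼ` are the sample means of coordinate `j` over the two
halves. Each of them has mean `μⱼ` and variance `1/m`, `Uⱼ` is independent of `Vⱼ` (disjoint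
halves) and the products `Uⱼ Vⱼ` are pairwise independent (disjoint coordinates). Hence
`E T = ∑ⱼ μⱼ²`, and `Var T = ∑ⱼ Var (Uⱼ Vⱼ)`, where for independent `U, V`
`Var (U V) = Var U Var V + Var U (E V)² + (E U)² Var V = 1/m² + 2 μⱼ²/m`.
-/

open MeasureTheory ProbabilityTheory

namespace ProbabilityTheory

section Independence

variable {Ω ι β : Type*} {mΩ : MeasurableSpace Ω} [mβ : MeasurableSpace β] {μ : Measure Ω}
  {f : ι → Ω → β}

lemma measurable_iSup_comap_of_mem {S : Set ι} {i : ι} (hi : i ∈ S) :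
    Measurable[⨆ i ∈ S, mβ.comap (f i)] (f i) :=
  (comap_measurable (f i)).mono (le_iSup₂ (f := fun i (_ : i ∈ S) => mβ.comap (f i)) i hi) le_rfl

lemma iIndepFun.indepFun_of_measurable_iSup {γ δ : Type*} [MeasurableSpace γ]
    [MeasurableSpace δ] (hf : iIndepFun f μ) (hmeas : ∀ i, Measurable (f i))
    {S T : Set ι} (hST : Disjoint S T) {F : Ω → γ} {G : Ω → δ}
    (hF : Measurable[⨆ i ∈ S, mβ.comap (f i)] F) (hG : Measurable[⨆ i ∈ T, mβ.comap (f i)] G) :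
    F ⟂ᵢ[μ] G :=
  (IndepFun_iff_Indep F G μ).2 <| indep_of_indep_of_le_right
    (indep_of_indep_of_le_left
      (indep_iSup_of_disjoint (fun i => (hmeas i).comap_le) hf.iIndep hST) hF.comap_le)
    hG.comap_le

end Independence

section Moments

variable {Ω : Type*} {mΩ : MeasurableSpace Ω} {μ : Measure Ω} {X Y : Ω → ℝ}

lemma IndepFun.memLp_two_mul (hX : MemLp X 2 μ) (hY : MemLp Y 2 μ) (h : X ⟂ᵢ[μ] Y) :
    MemLp (X * Y) 2 μ := by
  have hsq : (fun ω => X ω ^ 2) ⟂ᵢ[μ] (fun ω => Y ω ^ 2) :=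
    h.comp (measurable_id.pow_const 2) (measurable_id.pow_const 2)
  refine (memLp_two_iff_integrable_sq (hX.aestronglyMeasurable.mul hY.aestronglyMeasurable)).2 ?_
  simpa only [Pi.mul_def, mul_pow] using hsq.integrable_mul hX.integrable_sq hY.integrable_sq

lemma IndepFun.variance_mul [IsProbabilityMeasure μ] (hX : MemLp X 2 μ) (hY : MemLp Y 2 μ)
    (h : X ⟂ᵢ[μ] Y) :
    Var[X * Y; μ] = Var[X; μ] * Var[Y; μ] + Var[X; μ] * μ[Y] ^ 2 + μ[X] ^ 2 * Var[Y; μ] := by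
  have hsq : (fun ω => X ω ^ 2) ⟂ᵢ[μ] (fun ω => Y ω ^ 2) :=
    h.comp (measurable_id.pow_const 2) (measurable_id.pow_const 2)
  have hsecond : μ[(X * Y) ^ 2] = μ[X ^ 2] * μ[Y ^ 2] := by
    simpa only [Pi.pow_apply, Pi.mul_apply, mul_pow] using hsq.integral_mul_eq_mul_integral
      hX.integrable_sq.aestronglyMeasurable hY.integrable_sq.aestronglyMeasurable
  rw [variance_eq_sub (h.memLp_two_mul hX hY), variance_eq_sub hX, variance_eq_sub hY, hsecond,
    h.integral_mul_eq_mul_integral hX.aestronglyMeasurable hY.aestronglyMeasurable]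
  ring

variable {ι : Type*} [Fintype ι] {U V : ι → Ω → ℝ}

lemma integral_sum_mul_of_indepFun (hU : ∀ i, Integrable (U i) μ) (hV : ∀ i, Integrable (V i) μ)
    (h : ∀ i, U i ⟂ᵢ[μ] V i) :
    μ[∑ i, U i * V i] = ∑ i, μ[U i] * μ[V i] := by
  simp only [Finset.sum_apply]
  rw [integral_finsetSum _ fun i _ => (h i).integrable_mul (hU i) (hV i)]
  exact Finset.sum_congr rfl fun i _ =>
    (h i).integral_mul_eq_mul_integral (hU i).aestronglyMeasurable (hV i).aestronglyMeasurable

lemma variance_sum_mul_of_indepFun [IsProbabilityMeasure μ] (hU : ∀ i, MemLp (U i) 2 μ)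
    (hV : ∀ i, MemLp (V i) 2 μ) (h : ∀ i, U i ⟂ᵢ[μ] V i)
    (hpair : Pairwise fun i j => (U i * V i) ⟂ᵢ[μ] (U j * V j)) :
    Var[∑ i, U i * V i; μ] =
      ∑ i, (Var[U i; μ] * Var[V i; μ] + Var[U i; μ] * μ[V i] ^ 2 + μ[U i] ^ 2 * Var[V i; μ]) := by
  rw [IndepFun.variance_sum (fun i _ => (h i).memLp_two_mul (hU i) (hV i))
    fun i _ j _ hij => hpair hij]
  exact Finset.sum_congr rfl fun i _ => (h i).variance_mul (hU i) (hV i)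

variable {a : ℝ} {v : NNReal}

lemma HasLaw.memLp_two_of_gaussianReal (hX : HasLaw X (gaussianReal a v) μ) : MemLp X 2 μ :=
  (memLp_map_measure_iff aestronglyMeasurable_id hX.aemeasurable).1
    (hX.map_eq ▸ memLp_id_gaussianReal 2)

lemma HasLaw.integral_eq_of_gaussianReal (hX : HasLaw X (gaussianReal a v) μ) : μ[X] = a :=
  hX.integral_eq.trans integral_id_gaussianReal

lemma HasLaw.variance_eq_of_gaussianReal (hX : HasLaw X (gaussianReal a v) μ) : Var[X; μ] = v :=
  hX.variance_eq.trans variance_id_gaussianReal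

end Moments

section SampleMean

variable {Ω κ : Type*} [Fintype κ]

noncomputable def sampleMean (X : κ → Ω → ℝ) : Ω → ℝ := fun ω => (Fintype.card κ : ℝ)⁻¹ * ∑ k, X k ω

lemma sum_sampleMean_mul_sampleMean {ι : Type*} [Fintype ι] (X Y : κ → ι → Ω → ℝ) :
    ∑ j, sampleMean (fun k => X k j) * sampleMean (fun l => Y l j) =
      fun ω => 1 / (Fintype.card κ : ℝ) ^ 2 * ∑ k, ∑ l, ∑ j, X k j ω * Y l j ω := by
  ext ω
  have hj (j : ι) : sampleMean (fun k => X k j) ω * sampleMean (fun l => Y l j) ω =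
      1 / (Fintype.card κ : ℝ) ^ 2 * ∑ k, ∑ l, X k j ω * Y l j ω := by
    simp only [sampleMean, ← Finset.sum_mul_sum]
    ring
  simp only [Finset.sum_apply, Pi.mul_apply, hj]
  rw [← Finset.mul_sum, Finset.sum_comm]
  exact congrArg _ (Finset.sum_congr rfl fun k _ => Finset.sum_comm)

lemma measurable_sampleMean {m : MeasurableSpace Ω} {X : κ → Ω → ℝ}
    (hX : ∀ k, Measurable (X k)) : Measurable (sampleMean X) :=
  (Finset.measurable_sum _ fun k _ => hX k).const_mul _

variable {mΩ : MeasurableSpace Ω} {μ : Measure Ω} {X : κ → Ω → ℝ}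

lemma memLp_two_sampleMean (hX : ∀ k, MemLp (X k) 2 μ) : MemLp (sampleMean X) 2 μ :=
  (memLp_finsetSum _ fun k _ => hX k).const_mul _

lemma integral_sampleMean [Nonempty κ] {a : ℝ} (hX : ∀ k, Integrable (X k) μ)
    (hmean : ∀ k, μ[X k] = a) : μ[sampleMean X] = a := by
  unfold sampleMean
  rw [integral_const_mul, integral_finsetSum _ fun k _ => hX k]
  simp [hmean]

lemma variance_sampleMean {v : ℝ} (hX : ∀ k, MemLp (X k) 2 μ)
    (hindep : Pairwise fun k l => X k ⟂ᵢ[μ] X l) (hvar : ∀ k, Var[X k; μ] = v) :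
    Var[sampleMean X; μ] = v / Fintype.card κ := by
  have hsum : Var[∑ k, X k; μ] = ∑ k, Var[X k; μ] :=
    IndepFun.variance_sum (fun k _ => hX k) fun k _ l _ hkl => hindep hkl
  unfold sampleMean
  rw [variance_const_mul, ← Finset.sum_fn, hsum]
  simp [hvar]
  field_simp

variable {α β ι : Type*} [Fintype α] [Fintype β] {Z : (α ⊕ β) × ι → Ω → ℝ}

lemma iIndepFun.indepFun_sampleMean_inl_inr (hZ : iIndepFun Z μ) (hmeas : ∀ s, Measurable (Z s))
    (j j' : ι) :
    sampleMean (fun k => Z (Sum.inl k, j)) ⟂ᵢ[μ] sampleMean (fun l => Z (Sum.inr l, j')) :=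
  hZ.indepFun_of_measurable_iSup hmeas (S := {s | s.1.isLeft}) (T := {s | s.1.isRight})
    (Set.disjoint_left.2 fun s hl hr => by obtain ⟨_ | _, _⟩ := s <;> simp at hl hr)
    (measurable_sampleMean fun _ => measurable_iSup_comap_of_mem rfl)
    (measurable_sampleMean fun _ => measurable_iSup_comap_of_mem rfl)

lemma iIndepFun.pairwise_indepFun_sampleMean_mul_sampleMean (hZ : iIndepFun Z μ)
    (hmeas : ∀ s, Measurable (Z s)) :
    Pairwise fun j j' =>
      (sampleMean (fun k => Z (Sum.inl k, j)) * sampleMean (fun l => Z (Sum.inr l, j))) ⟂ᵢ[μ]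
      (sampleMean (fun k => Z (Sum.inl k, j')) * sampleMean (fun l => Z (Sum.inr l, j'))) := by
  intro j j' hjj'
  have hcoord (j : ι) : Measurable[⨆ s ∈ {s : (α ⊕ β) × ι | s.2 = j}, MeasurableSpace.comap (Z s)
      inferInstance] (sampleMean (fun k => Z (Sum.inl k, j)) *
        sampleMean (fun l => Z (Sum.inr l, j))) :=
    Measurable.mul (f := sampleMean fun k => Z (Sum.inl k, j))
      (g := sampleMean fun l => Z (Sum.inr l, j))
      (measurable_sampleMean fun _ => measurable_iSup_comap_of_mem rfl)
      (measurable_sampleMean fun _ => measurable_iSup_comap_of_mem rfl)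
  exact hZ.indepFun_of_measurable_iSup hmeas
    (Set.disjoint_left.2 fun s (h : s.2 = j) (h' : s.2 = j') => hjj' (h.symm.trans h'))
    (hcoord j) (hcoord j')

end SampleMean

end ProbabilityTheory

theorem within_class_estimator_mean_variance_general
    (d m : ℕ) (hm : 1 ≤ m)
    (μv : Fin d → ℝ)
    (Ω : Type*) [MeasurableSpace Ω] (μ : Measure Ω) [IsProbabilityMeasure μ]
    (Z : (Fin m ⊕ Fin m) × Fin d → Ω → ℝ)
    (hmeas : ∀ s, Measurable (Z s))
    (hindep : iIndepFun Z μ)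
    (hlaw : ∀ (s : Fin m ⊕ Fin m) (j : Fin d),
      μ.map (Z (s, j)) = gaussianReal (μv j) 1)
    (T : Ω → ℝ)
    (hT : T = fun ω => (1 / (m : ℝ) ^ 2) *
      ∑ k : Fin m, ∑ l : Fin m, ∑ j : Fin d,
        Z (Sum.inl k, j) ω * Z (Sum.inr l, j) ω) :
    (∫ ω, T ω ∂μ) = ∑ j : Fin d, μv j ^ 2 ∧
    variance T μ
      = 2 * (∑ j : Fin d, μv j ^ 2) / m + (d : ℝ) / (m : ℝ) ^ 2 := by
  have : Nonempty (Fin m) := ⟨⟨0, hm⟩⟩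
  have hZ (s j) : HasLaw (Z (s, j)) (gaussianReal (μv j) 1) μ :=
    ⟨(hmeas _).aemeasurable, hlaw s j⟩
  have hL2 (half : Fin m → Fin m ⊕ Fin m) (j) : MemLp (sampleMean fun k => Z (half k, j)) 2 μ :=
    memLp_two_sampleMean fun k => (hZ _ j).memLp_two_of_gaussianReal
  have hmean (half : Fin m → Fin m ⊕ Fin m) (j) : μ[sampleMean fun k => Z (half k, j)] = μv j :=
    integral_sampleMean (fun k => (hZ _ j).memLp_two_of_gaussianReal.integrable one_le_two)
      fun k => (hZ _ j).integral_eq_of_gaussianReal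
  have hvar (half : Fin m → Fin m ⊕ Fin m) (hhalf : half.Injective) (j) :
      Var[sampleMean fun k => Z (half k, j); μ] = 1 / m := by
    rw [variance_sampleMean (fun k => (hZ _ j).memLp_two_of_gaussianReal)
      (fun k l hkl => hindep.indepFun (by simpa [hhalf.eq_iff] using hkl))
      fun k => (hZ _ j).variance_eq_of_gaussianReal]
    simp
  have hhalves (j : Fin d) := hindep.indepFun_sampleMean_inl_inr hmeas j j
  rw [hT, show (1 / (m : ℝ) ^ 2) = 1 / (Fintype.card (Fin m) : ℝ) ^ 2 by simp,
    ← sum_sampleMean_mul_sampleMean (fun k j => Z (Sum.inl k, j)) fun l j => Z (Sum.inr l, j)]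
  constructor
  · rw [integral_sum_mul_of_indepFun (fun j => (hL2 _ j).integrable one_le_two)
      (fun j => (hL2 _ j).integrable one_le_two) hhalves]
    simp [hmean, sq]
  · rw [variance_sum_mul_of_indepFun (hL2 _) (hL2 _) hhalves
      (hindep.pairwise_indepFun_sampleMean_mul_sampleMean hmeas)]
    simp only [hmean, hvar _ Sum.inl_injective, hvar _ Sum.inr_injective, Finset.sum_add_distrib,
      Finset.sum_const, Finset.card_univ, Fintype.card_fin, nsmul_eq_mul, ← Finset.mul_sum,
      ← Finset.sum_mul]
    ring

/-- Within-class estimator. Let `x_1,…,x_{2m}` be i.i.d. `N(μ, I_d)` split into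
two halves (modeled here with index type `Fin m ⊕ Fin m` and all coordinates of all vectors
independent with the Gaussian coordinate distributions). Then
`T = (1/m²)·Σ_{k=1}^m Σ_{l=m+1}^{2m} ⟨x_k, x_l⟩` satisfies `E[T] = ‖μ‖²` and
`Var(T) = 2‖μ‖²/m + d/m²`. -/
theorem within_class_estimator_mean_variance
    (d m : ℕ) (hd : 1 ≤ d) (hm : 1 ≤ m)
    (μv : Fin d → ℝ)
    (Ω : Type*) [MeasurableSpace Ω] (μ : Measure Ω) [IsProbabilityMeasure μ]
    (Z : (Fin m ⊕ Fin m) × Fin d → Ω → ℝ)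
    (hmeas : ∀ s, Measurable (Z s))
    (hindep : iIndepFun Z μ)
    (hlaw : ∀ (s : Fin m ⊕ Fin m) (j : Fin d),
      μ.map (Z (s, j)) = gaussianReal (μv j) 1)
    (T : Ω → ℝ)
    (hT : T = fun ω => (1 / (m : ℝ) ^ 2) *
      ∑ k : Fin m, ∑ l : Fin m, ∑ j : Fin d,
        Z (Sum.inl k, j) ω * Z (Sum.inr l, j) ω) :
    (∫ ω, T ω ∂μ) = ∑ j : Fin d, μv j ^ 2 ∧
    variance T μ
      = 2 * (∑ j : Fin d, μv j ^ 2) / m + (d : ℝ) / (m : ℝ) ^ 2 :=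
  within_class_estimator_mean_variance_general d m hm μv Ω μ Z hmeas hindep hlaw T hT
end
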